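/- Let (X,d) be a geodesic metric space, p > 1, x ≠ y points of X, 0 < λ < 1, and μ = λδ_x + (1−λ)δ_y. Then any point a ∈ X minimizing z ↦ W_p(δ_z, μ) over X lies on a minimizing geodesic from x to y. More precisely, for every a ∈ X not lying on any minimizing geodesic from x to y there exists a point a' on a minimizing geodesic from x to y with W_p(δ_{a'}, μ) < W_p(δ_a, μ). -/

import Mathlib

open MeasureTheory ENNReal Set

noncomputable section

/-- The set of couplings (transference plans) between two measures. -/
def Couplings {X : Type*} [MeasurableSpace X] (μ ν : Measure X) :
    Set (Measure (X × X)) :=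
  {π | π.map Prod.fst = μ ∧ π.map Prod.snd = ν}

/-- The `p`-Wasserstein (extended) distance between two measures. -/
def Wp {X : Type*} [PseudoEMetricSpace X] [MeasurableSpace X] (p : ℝ)
    (μ ν : Measure X) : ℝ≥0∞ :=
  (⨅ π ∈ Couplings μ ν, ∫⁻ z, edist z.1 z.2 ^ p ∂π) ^ (1 / p)

/-- The `p`-Wasserstein space: probability measures with finite `p`-th moment. -/
def WSpace (X : Type*) [PseudoEMetricSpace X] [MeasurableSpace X] (p : ℝ) :
    Set (Measure X) :=
  {μ | IsProbabilityMeasure μ ∧ ∃ x₀ : X, ∫⁻ x, edist x x₀ ^ p ∂μ ≠ ⊤}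

/-- The image of `X` in its Wasserstein space: the set of Dirac measures. -/
def Diracs (X : Type*) [MeasurableSpace X] : Set (Measure X) :=
  Set.range (Measure.dirac : X → Measure X)

/-- Distance from a point to a set, with respect to a distance function `ρ`. -/
def distToSet {Y : Type*} (ρ : Y → Y → ℝ≥0∞) (y : Y) (A : Set Y) : ℝ≥0∞ :=
  ⨅ a ∈ A, ρ y a

/-- `y` has a unique metric projection onto `A`. -/
def HasUniqueProj {Y : Type*} (ρ : Y → Y → ℝ≥0∞) (A : Set Y) (y : Y) : Prop :=
  ∃! a, a ∈ A ∧ ρ y a = distToSet ρ y A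

/-- The reach of `A` at `a ∈ A`, within the ambient set `S`: the supremum of radii `r`
such that every point of the ball `B_r(a) ∩ S` has a unique metric projection onto `A`. -/
def reachAt {Y : Type*} (ρ : Y → Y → ℝ≥0∞) (S A : Set Y) (a : Y) : ℝ≥0∞ :=
  sSup {r : ℝ≥0∞ | ∀ y ∈ S, ρ a y < r → HasUniqueProj ρ A y}

/-- The global reach of `A` within the ambient set `S`. -/
def globalReach {Y : Type*} (ρ : Y → Y → ℝ≥0∞) (S A : Set Y) : ℝ≥0∞ :=
  ⨅ a ∈ A, reachAt ρ S A a

/-- A minimizing geodesic from `x` to `y`, parametrized proportionally on `[0,1]`. -/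
def IsMinGeodesic {X : Type*} [PseudoMetricSpace X] (γ : ℝ → X) (x y : X) : Prop :=
  γ 0 = x ∧ γ 1 = y ∧
    ∀ s ∈ Set.Icc (0:ℝ) 1, ∀ t ∈ Set.Icc (0:ℝ) 1, dist (γ s) (γ t) = |s - t| * dist x y

/-- A geodesic metric space: any two points are joined by a minimizing geodesic. -/
def IsGeodesicSpace (X : Type*) [PseudoMetricSpace X] : Prop :=
  ∀ x y : X, ∃ γ : ℝ → X, IsMinGeodesic γ x y

/-- `a` lies on some minimizing geodesic from `x` to `y`. -/
def OnMinGeodesic {X : Type*} [PseudoMetricSpace X] (a x y : X) : Prop :=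
  ∃ γ : ℝ → X, ∃ t ∈ Set.Icc (0:ℝ) 1, IsMinGeodesic γ x y ∧ γ t = a


/-!
Against a Dirac measure the only coupling is the product one, so
`W_p(δ_a, μ)^p = λ d(a,x)^p + (1-λ) d(a,y)^p`. If `a` lies on no minimizing geodesic from `x`
to `y`, then `d(x,y) < d(a,x) + d(a,y)`, since a point realizing equality in the triangle
inequality lies on the concatenation of geodesics `x → a → y`. The point `a'` on a geodesic
from `x` to `y` at distance `min (d(a,x), d(x,y))` from `x` is then no farther from `x` and
strictly closer to `y` than `a`, hence has strictly smaller cost.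
-/

namespace IsMinGeodesic

variable {X : Type*} [PseudoMetricSpace X] {γ : ℝ → X} {x y : X} {t : ℝ}

lemma dist_apply_left (hγ : IsMinGeodesic γ x y) (ht : t ∈ Icc (0 : ℝ) 1) :
    dist (γ t) x = t * dist x y := by
  have h := hγ.2.2 t ht 0 (left_mem_Icc.2 zero_le_one)
  rwa [hγ.1, sub_zero, abs_of_nonneg ht.1] at h

lemma dist_apply_right (hγ : IsMinGeodesic γ x y) (ht : t ∈ Icc (0 : ℝ) 1) :
    dist (γ t) y = (1 - t) * dist x y := by
  have h := hγ.2.2 t ht 1 (right_mem_Icc.2 zero_le_one)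
  rwa [hγ.2.1, abs_sub_comm, abs_of_nonneg (sub_nonneg.2 ht.2)] at h

lemma exists_dist_eq (hγ : IsMinGeodesic γ x y) {s : ℝ} (hs0 : 0 ≤ s) (hs : s ≤ dist x y) :
    ∃ t ∈ Icc (0 : ℝ) 1, dist (γ t) x = s ∧ dist (γ t) y = dist x y - s := by
  have ht : s / dist x y ∈ Icc (0 : ℝ) 1 :=
    ⟨div_nonneg hs0 dist_nonneg, div_le_one_of_le₀ hs dist_nonneg⟩
  have hsD : s / dist x y * dist x y = s :=
    div_mul_cancel_of_imp fun h => le_antisymm (h ▸ hs) hs0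
  refine ⟨_, ht, ?_, ?_⟩
  · rw [hγ.dist_apply_left ht, hsD]
  · rw [hγ.dist_apply_right ht, sub_mul, one_mul, hsD]

lemma dist_apply_affine (hγ : IsMinGeodesic γ x y) {t₀ t₁ D : ℝ} (ht : t₀ < t₁)
    (hD : dist x y = (t₁ - t₀) * D) {s u : ℝ} (hs : s ∈ Icc t₀ t₁) (hu : u ∈ Icc t₀ t₁) :
    dist (γ ((s - t₀) / (t₁ - t₀))) (γ ((u - t₀) / (t₁ - t₀))) = |s - u| * D := by
  have hr : 0 < t₁ - t₀ := sub_pos.2 ht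
  have hmem : ∀ v ∈ Icc t₀ t₁, (v - t₀) / (t₁ - t₀) ∈ Icc (0 : ℝ) 1 := fun v hv =>
    ⟨div_nonneg (sub_nonneg.2 hv.1) hr.le, div_le_one_of_le₀ (by linarith [hv.2]) hr.le⟩
  rw [hγ.2.2 _ (hmem s hs) _ (hmem u hu), hD, ← sub_div, sub_sub_sub_cancel_right, abs_div,
    abs_of_pos hr]
  field_simp

end IsMinGeodesic

section Geodesic

variable {X : Type*} [PseudoMetricSpace X]

lemma isMinGeodesic_of_dist_le {γ : ℝ → X} {x y : X} (h0 : γ 0 = x) (h1 : γ 1 = y)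
    (hle : ∀ s ∈ Icc (0 : ℝ) 1, ∀ u ∈ Icc (0 : ℝ) 1, s ≤ u →
      dist (γ s) (γ u) ≤ (u - s) * dist x y) :
    IsMinGeodesic γ x y := by
  have hge : ∀ s ∈ Icc (0 : ℝ) 1, ∀ u ∈ Icc (0 : ℝ) 1, s ≤ u →
      dist (γ s) (γ u) = (u - s) * dist x y := by
    intro s hs u hu hsu
    have hxs := hle 0 (left_mem_Icc.2 zero_le_one) s hs hs.1
    have huy := hle u hu 1 (right_mem_Icc.2 zero_le_one) hu.2
    have := dist_triangle4 x (γ s) (γ u) y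
    rw [h0] at hxs
    rw [h1] at huy
    linarith [hle s hs u hu hsu]
  refine ⟨h0, h1, fun s hs u hu => ?_⟩
  rcases le_total s u with hsu | hus
  · rw [hge s hs u hu hsu, abs_sub_comm, abs_of_nonneg (sub_nonneg.2 hsu)]
  · rw [dist_comm, hge u hu s hs hus, abs_of_nonneg (sub_nonneg.2 hus)]

lemma onMinGeodesic_left (hgeo : IsGeodesicSpace X) (x y : X) : OnMinGeodesic x x y :=
  let ⟨γ, hγ⟩ := hgeo x y
  ⟨γ, 0, left_mem_Icc.2 zero_le_one, hγ, hγ.1⟩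

lemma onMinGeodesic_right (hgeo : IsGeodesicSpace X) (x y : X) : OnMinGeodesic y x y :=
  let ⟨γ, hγ⟩ := hgeo x y
  ⟨γ, 1, right_mem_Icc.2 zero_le_one, hγ, hγ.2.1⟩

lemma IsMinGeodesic.concat {γ₁ γ₂ : ℝ → X} {x a y : X} (h₁ : IsMinGeodesic γ₁ x a)
    (h₂ : IsMinGeodesic γ₂ a y) {t : ℝ} (ht0 : 0 < t) (ht1 : t < 1)
    (hxa : dist x a = t * dist x y) (hay : dist a y = (1 - t) * dist x y) :
    IsMinGeodesic (fun s => if s ≤ t then γ₁ (s / t) else γ₂ ((s - t) / (1 - t))) x y := by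
  set γ : ℝ → X := fun s => if s ≤ t then γ₁ (s / t) else γ₂ ((s - t) / (1 - t))
  have piece₁ : ∀ s ∈ Icc 0 t, ∀ u ∈ Icc 0 t, dist (γ s) (γ u) = |s - u| * dist x y := by
    intro s hs u hu
    have h := h₁.dist_apply_affine ht0 (by rwa [sub_zero]) hs hu
    simp only [sub_zero] at h
    simp only [γ, if_pos hs.2, if_pos hu.2, h]
  have piece₂ : ∀ s ∈ Icc t 1, ∀ u ∈ Ioc t 1,
      dist (γ₂ ((s - t) / (1 - t))) (γ u) = |s - u| * dist x y := by
    intro s hs u hu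
    simp only [γ, if_neg (not_le.2 hu.1)]
    exact h₂.dist_apply_affine ht1 hay hs (Ioc_subset_Icc_self hu)
  have hγt : γ t = γ₂ ((t - t) / (1 - t)) := by
    simp only [γ, le_refl, if_pos, div_self ht0.ne', sub_self, zero_div, h₁.2.1, h₂.1]
  refine isMinGeodesic_of_dist_le ?_ ?_ fun s hs u hu hsu => ?_
  · simp only [γ, if_pos ht0.le, zero_div, h₁.1]
  · simp only [γ, if_neg (not_le.2 ht1), div_self (sub_pos.2 ht1).ne', h₂.2.1]
  rcases le_or_gt u t with hut | htu
  · rw [piece₁ s ⟨hs.1, hsu.trans hut⟩ u ⟨hu.1, hut⟩, abs_sub_comm,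
      abs_of_nonneg (sub_nonneg.2 hsu)]
  rcases le_or_gt s t with hst | hts
  · have hs' := piece₁ s ⟨hs.1, hst⟩ t ⟨ht0.le, le_rfl⟩
    have hu' := piece₂ t ⟨le_rfl, ht1.le⟩ u ⟨htu, hu.2⟩
    rw [← hγt] at hu'
    rw [abs_sub_comm, abs_of_nonneg (sub_nonneg.2 hst)] at hs'
    rw [abs_sub_comm, abs_of_nonneg (sub_nonneg.2 htu.le)] at hu'
    linarith [dist_triangle (γ s) (γ t) (γ u)]
  · have h := piece₂ s ⟨hts.le, hs.2⟩ u ⟨htu, hu.2⟩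
    simp only [γ, if_neg (not_le.2 hts)] at h ⊢
    rw [h, abs_sub_comm, abs_of_nonneg (sub_nonneg.2 hsu)]

end Geodesic

section Metric

variable {X : Type*} [MetricSpace X]

lemma onMinGeodesic_of_dist_add_dist_eq (hgeo : IsGeodesicSpace X) {a x y : X}
    (h : dist x a + dist a y = dist x y) : OnMinGeodesic a x y := by
  rcases eq_or_ne a x with rfl | hax
  · exact onMinGeodesic_left hgeo a y
  rcases eq_or_ne a y with rfl | hay
  · exact onMinGeodesic_right hgeo x a
  have hxa : 0 < dist x a := dist_pos.2 hax.symm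
  have hay : 0 < dist a y := dist_pos.2 hay
  have hD : 0 < dist x y := h ▸ add_pos hxa hay
  set t := dist x a / dist x y
  have htD : dist x a = t * dist x y := (div_mul_cancel₀ _ hD.ne').symm
  obtain ⟨γ₁, h₁⟩ := hgeo x a
  obtain ⟨γ₂, h₂⟩ := hgeo a y
  have ht0 : 0 < t := by positivity
  have ht1 : t < 1 := (div_lt_one hD).2 (by linarith)
  refine ⟨_, t, ⟨ht0.le, ht1.le⟩, h₁.concat h₂ ht0 ht1 htD (by linarith), ?_⟩
  rw [if_pos le_rfl, div_self ht0.ne', h₁.2.1]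

lemma exists_onMinGeodesic_dist_le_dist_lt (hgeo : IsGeodesicSpace X) {a x y : X}
    (ha : ¬ OnMinGeodesic a x y) :
    ∃ a', OnMinGeodesic a' x y ∧ dist a' x ≤ dist a x ∧ dist a' y < dist a y := by
  have hlt : dist x y < dist a x + dist a y := by
    refine lt_of_le_of_ne (dist_comm x a ▸ dist_triangle x a y) fun h => ha ?_
    exact onMinGeodesic_of_dist_add_dist_eq hgeo (by rw [dist_comm a x] at h; exact h.symm)
  obtain ⟨γ, hγ⟩ := hgeo x y
  obtain ⟨t, ht, hx, hy⟩ :=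
    hγ.exists_dist_eq (le_min dist_nonneg dist_nonneg) (min_le_right (dist a x) (dist x y))
  refine ⟨γ t, ⟨γ, t, ht, hγ, rfl⟩, hx ▸ min_le_left _ _, ?_⟩
  rw [hy]
  rcases min_cases (dist a x) (dist x y) with ⟨hmin, -⟩ | ⟨hmin, -⟩ <;> rw [hmin] <;>
    linarith [dist_triangle a y x, dist_comm x y]

end Metric

lemma lintegral_eq_of_mem_couplings_dirac_left {X : Type*} [MeasurableSpace X]
    [MeasurableSingletonClass X] {b : X} {ν : Measure X} {π : Measure (X × X)}
    (hπ : π ∈ Couplings (Measure.dirac b) ν)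
    {f : X → X → ℝ≥0∞} (hf : Measurable (f b)) :
    ∫⁻ z, f z.1 z.2 ∂π = ∫⁻ w, f b w ∂ν := by
  have hfst : ∀ᵐ z ∂π, z.1 = b :=
    ae_of_ae_map measurable_fst.aemeasurable (hπ.1 ▸ ae_eq_dirac id)
  calc ∫⁻ z, f z.1 z.2 ∂π = ∫⁻ z, f b z.2 ∂π :=
        lintegral_congr_ae (hfst.mono fun z hz => by simp only [hz])
    _ = ∫⁻ w, f b w ∂ν := by rw [← hπ.2, lintegral_map hf measurable_snd]

lemma Wp_dirac_left {X : Type*} [PseudoEMetricSpace X] [MeasurableSpace X]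
    [OpensMeasurableSpace X] [MeasurableSingletonClass X] (p : ℝ) (b : X)
    (ν : Measure X) [IsProbabilityMeasure ν] :
    Wp p (Measure.dirac b) ν = (∫⁻ w, edist b w ^ p ∂ν) ^ (1 / p) := by
  have hcost : ∀ π ∈ Couplings (Measure.dirac b) ν,
      ∫⁻ z, edist z.1 z.2 ^ p ∂π = ∫⁻ w, edist b w ^ p ∂ν := fun π hπ =>
    lintegral_eq_of_mem_couplings_dirac_left (f := fun u w => edist u w ^ p) hπ
      (ENNReal.continuous_rpow_const.comp (continuous_const.edist continuous_id)).measurable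
  have hprod : (Measure.dirac b).prod ν ∈ Couplings (Measure.dirac b) ν := by
    refine ⟨?_, ?_⟩ <;> simp [Measure.map_fst_prod, Measure.map_snd_prod]
  unfold Wp
  congr 1
  exact le_antisymm ((iInf₂_le _ hprod).trans_eq (hcost _ hprod))
    (le_iInf₂ fun π hπ => (hcost π hπ).ge)

section TwoPoint

variable {X : Type*} [PseudoMetricSpace X] [MeasurableSpace X] [OpensMeasurableSpace X]
  [MeasurableSingletonClass X] {l : ℝ}

lemma Wp_dirac_two_point (hl0 : 0 ≤ l) (hl1 : l ≤ 1) (p : ℝ) (b x y : X) :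
    Wp p (Measure.dirac b)
      (ENNReal.ofReal l • Measure.dirac x + ENNReal.ofReal (1 - l) • Measure.dirac y) =
      (ENNReal.ofReal l * edist b x ^ p + ENNReal.ofReal (1 - l) * edist b y ^ p) ^ (1 / p) := by
  have : IsProbabilityMeasure
      (ENNReal.ofReal l • Measure.dirac x + ENNReal.ofReal (1 - l) • Measure.dirac y) := by
    constructor
    simp [← ENNReal.ofReal_add hl0 (sub_nonneg.2 hl1)]
  rw [Wp_dirac_left]
  simp [lintegral_add_measure, lintegral_smul_measure, lintegral_dirac]

lemma Wp_dirac_two_point_lt_of_dist_le_of_dist_lt (hl0 : 0 ≤ l) (hl1 : l < 1) {p : ℝ}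
    (hp : 0 < p) {a a' x y : X} (hx : dist a' x ≤ dist a x) (hy : dist a' y < dist a y) :
    Wp p (Measure.dirac a')
        (ENNReal.ofReal l • Measure.dirac x + ENNReal.ofReal (1 - l) • Measure.dirac y) <
      Wp p (Measure.dirac a)
        (ENNReal.ofReal l • Measure.dirac x + ENNReal.ofReal (1 - l) • Measure.dirac y) := by
  rw [Wp_dirac_two_point hl0 hl1.le, Wp_dirac_two_point hl0 hl1.le]
  refine ENNReal.rpow_lt_rpow (ENNReal.add_lt_add_of_le_of_lt ?_ ?_ ?_) (by positivity)
  · exact ENNReal.mul_ne_top ofReal_ne_top (ENNReal.rpow_ne_top_of_nonneg hp.le (edist_ne_top _ _))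
  · rw [edist_dist, edist_dist]
    gcongr
  · refine ENNReal.mul_lt_mul_right (ENNReal.ofReal_pos.2 (sub_pos.2 hl1)).ne' ofReal_ne_top
      (ENNReal.rpow_lt_rpow ?_ hp)
    rwa [edist_dist, edist_dist, ENNReal.ofReal_lt_ofReal_iff_of_nonneg dist_nonneg]

end TwoPoint

theorem Wp_minimizers_lie_on_geodesics {X : Type*} [MetricSpace X] [MeasurableSpace X]
    [BorelSpace X] (hgeo : IsGeodesicSpace X) (p : ℝ) (hp : 1 < p)
    (x y : X) (l : ℝ) (hl0 : 0 < l) (hl1 : l < 1)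
    (μ : Measure X)
    (hμ : μ = ENNReal.ofReal l • Measure.dirac x + ENNReal.ofReal (1 - l) • Measure.dirac y) :
    (∀ a : X, (∀ b : X, Wp p (Measure.dirac a) μ ≤ Wp p (Measure.dirac b) μ) →
        OnMinGeodesic a x y) ∧
    (∀ a : X, ¬ OnMinGeodesic a x y → ∃ a' : X, OnMinGeodesic a' x y ∧
        Wp p (Measure.dirac a') μ < Wp p (Measure.dirac a) μ) := by
  have improve : ∀ a : X, ¬ OnMinGeodesic a x y → ∃ a' : X, OnMinGeodesic a' x y ∧
      Wp p (Measure.dirac a') μ < Wp p (Measure.dirac a) μ := by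
    intro a ha
    obtain ⟨a', ha', hx, hy⟩ := exists_onMinGeodesic_dist_le_dist_lt hgeo ha
    exact ⟨a', ha', hμ ▸ Wp_dirac_two_point_lt_of_dist_le_of_dist_lt hl0.le hl1
      (zero_lt_one.trans hp) hx hy⟩
  refine ⟨fun a hmin => ?_, improve⟩
  by_contra ha
  obtain ⟨a', -, hlt⟩ := improve a ha
  exact (hmin a').not_gt hlt
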